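/- arXiv:1302.1383 — 9 statements merged into one kernel-verified Lean document; each statement's English description precedes it below -/
import Mathlib

section
/- Let K be a field, a, b, λ, μ ∈ K with μ² = λ³ + aλ + b, f = Y²Z − X³ − aXZ² − bZ³ ∈ K[X,Y,Z], and P = −X² − λXZ − (a + λ²)Z². Then the product of the 2×2 matrices A = [[P, −Z(Y + μZ)], [Y − μZ, X − λZ]] and B = [[X − λZ, Z(Y + μZ)], [μZ − Y, P]] over K[X,Y,Z] satisfies A·B = f·I₂ and B·A = f·I₂. -/
open MvPolynomial

theorem stmt_1 (K : Type*) [Field K] (a b lam mu : K)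
    (h : mu ^ 2 = lam ^ 3 + a * lam + b) :
    letI X : MvPolynomial (Fin 3) K := MvPolynomial.X 0
    letI Y : MvPolynomial (Fin 3) K := MvPolynomial.X 1
    letI Z : MvPolynomial (Fin 3) K := MvPolynomial.X 2
    letI f : MvPolynomial (Fin 3) K := Y ^ 2 * Z - X ^ 3 - C a * X * Z ^ 2 - C b * Z ^ 3
    letI P : MvPolynomial (Fin 3) K := -X ^ 2 - C lam * X * Z - C (a + lam ^ 2) * Z ^ 2
    letI A : Matrix (Fin 2) (Fin 2) (MvPolynomial (Fin 3) K) :=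
      !![P, -(Z * (Y + C mu * Z)); Y - C mu * Z, X - C lam * Z]
    letI B : Matrix (Fin 2) (Fin 2) (MvPolynomial (Fin 3) K) :=
      !![X - C lam * Z, Z * (Y + C mu * Z); C mu * Z - Y, P]
    A * B = f • (1 : Matrix (Fin 2) (Fin 2) (MvPolynomial (Fin 3) K)) ∧
    B * A = f • (1 : Matrix (Fin 2) (Fin 2) (MvPolynomial (Fin 3) K)) := by
  have hmu : (C mu ^ 2 : MvPolynomial (Fin 3) K) = C lam ^ 3 + C a * C lam + C b := by
    rw [← map_pow, h]; simp only [map_add, map_mul, map_pow]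
  have hC : (C (a + lam ^ 2) : MvPolynomial (Fin 3) K) = C a + C lam ^ 2 := by
    simp only [map_add, map_pow]
  constructor <;>
  · refine Matrix.ext fun i j => ?_
    fin_cases i <;> fin_cases j <;>
    · simp only [Matrix.mul_apply, Fin.sum_univ_two,
        Matrix.cons_val', Matrix.cons_val_zero, Matrix.cons_val_one, Matrix.head_cons,
        Matrix.head_fin_const, Matrix.empty_val', Matrix.cons_val_fin_one,
        Matrix.smul_apply, Matrix.one_apply, Fin.zero_eta, Fin.mk_one,
        if_true, if_false, smul_eq_mul, mul_one, mul_zero, add_zero,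
        Matrix.of_apply, ne_eq, one_ne_zero, zero_ne_one, not_false_eq_true,
        Matrix.one_apply_eq, Matrix.one_apply_ne, Fin.isValue]
      first
      | linear_combination (-(MvPolynomial.X 2 : MvPolynomial (Fin 3) K) ^ 3) * hmu +
          ((MvPolynomial.X 2 : MvPolynomial (Fin 3) K) ^ 2 *
            (C lam * MvPolynomial.X 2 - MvPolynomial.X 0)) * hC
      | ring
end

section
/- Let K be a field, a, b, λ, μ ∈ K with μ² = λ³ + aλ + b, f = Y²Z − X³ − aXZ² − bZ³, and P = −X² − λXZ − (a + λ²)Z². Then the 2×2 matrices A = [[P, −Y − μZ], [−Z(Y − μZ), λZ − X]] and B = [[X − λZ, −Y − μZ], [−Z(Y − μZ), −P]] satisfy A·B = f·I₂ and B·A = f·I₂. -/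
open MvPolynomial

theorem stmt_3 (K : Type*) [Field K] (a b lam mu : K)
    (h : mu ^ 2 = lam ^ 3 + a * lam + b) :
    letI X : MvPolynomial (Fin 3) K := MvPolynomial.X 0
    letI Y : MvPolynomial (Fin 3) K := MvPolynomial.X 1
    letI Z : MvPolynomial (Fin 3) K := MvPolynomial.X 2
    letI f : MvPolynomial (Fin 3) K := Y ^ 2 * Z - X ^ 3 - C a * X * Z ^ 2 - C b * Z ^ 3
    letI P : MvPolynomial (Fin 3) K := -X ^ 2 - C lam * X * Z - C (a + lam ^ 2) * Z ^ 2
    letI A : Matrix (Fin 2) (Fin 2) (MvPolynomial (Fin 3) K) :=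
      !![P, -Y - C mu * Z; -(Z * (Y - C mu * Z)), C lam * Z - X]
    letI B : Matrix (Fin 2) (Fin 2) (MvPolynomial (Fin 3) K) :=
      !![X - C lam * Z, -Y - C mu * Z; -(Z * (Y - C mu * Z)), -P]
    A * B = f • (1 : Matrix (Fin 2) (Fin 2) (MvPolynomial (Fin 3) K)) ∧
    B * A = f • (1 : Matrix (Fin 2) (Fin 2) (MvPolynomial (Fin 3) K)) := by
  have hC : (C mu : MvPolynomial (Fin 3) K)^2 = C lam^3 + C a * C lam + C b := by
    rw [← C_pow, h]; push_cast [C_add, C_mul, C_pow]; ring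
  constructor <;>
  · refine Matrix.ext fun i j => ?_
    fin_cases i <;> fin_cases j <;>
    · simp [Matrix.mul_apply, Fin.sum_univ_succ, Matrix.one_apply, C_add, C_pow]
      first
      | linear_combination (MvPolynomial.X 2 : MvPolynomial (Fin 3) K)^3 * hC
      | linear_combination (-(MvPolynomial.X 2 : MvPolynomial (Fin 3) K)^3) * hC
      | linear_combination (2*(MvPolynomial.X 2 : MvPolynomial (Fin 3) K)^3) * hC
      | linear_combination (-2*(MvPolynomial.X 2 : MvPolynomial (Fin 3) K)^3) * hC
      | ring
end

section
/- Let K be a field, a, b ∈ K, and f = Y²Z − X³ − aXZ² − bZ³ ∈ K[X,Y,Z]. Then the matrices A = [[aZX − Y² + bZ², −X], [−X², −Z]] and B = [[−Z, X], [X², bZ² − Y² + aXZ]] satisfy A·B = f·I₂ and B·A = f·I₂. -/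
open MvPolynomial

theorem stmt_4 (K : Type*) [Field K] (a b : K) :
    letI X : MvPolynomial (Fin 3) K := MvPolynomial.X 0
    letI Y : MvPolynomial (Fin 3) K := MvPolynomial.X 1
    letI Z : MvPolynomial (Fin 3) K := MvPolynomial.X 2
    letI f : MvPolynomial (Fin 3) K := Y ^ 2 * Z - X ^ 3 - C a * X * Z ^ 2 - C b * Z ^ 3
    letI A : Matrix (Fin 2) (Fin 2) (MvPolynomial (Fin 3) K) :=
      !![C a * Z * X - Y ^ 2 + C b * Z ^ 2, -X; -X ^ 2, -Z]
    letI B : Matrix (Fin 2) (Fin 2) (MvPolynomial (Fin 3) K) :=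
      !![-Z, X; X ^ 2, C b * Z ^ 2 - Y ^ 2 + C a * X * Z]
    A * B = f • (1 : Matrix (Fin 2) (Fin 2) (MvPolynomial (Fin 3) K)) ∧
    B * A = f • (1 : Matrix (Fin 2) (Fin 2) (MvPolynomial (Fin 3) K)) := by
  constructor <;>
  · apply Matrix.ext; intro i j
    fin_cases i <;> fin_cases j <;>
      simp [Matrix.mul_apply, Fin.sum_univ_succ, Matrix.one_apply] <;> ring
end

section
/- Let K be a field, a, b ∈ K, and f = Y²Z − X³ − aXZ² − bZ³ ∈ K[X,Y,Z]. Define the 4×4 matrices A = [[Z, YZ, X², 0], [−Y, −bZ², aYZ, X² + aZ²], [X, 0, −bZ² − aXZ, −YZ], [0, X, Y, Z]] and B = [[−bZ² − aXZ, −YZ, −X², aZ²Y], [Y, Z, 0, −X² − aZ²], [−X, 0, Z, YZ], [0, −X, −Y, −bZ²]]. Then A·B = f·I₄ and B·A = f·I₄. -/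
set_option maxHeartbeats 2000000


open MvPolynomial


theorem my_mul_fin_four {α : Type*} [NonUnitalNonAssocSemiring α]
    (a₁₁ a₁₂ a₁₃ a₁₄ a₂₁ a₂₂ a₂₃ a₂₄ a₃₁ a₃₂ a₃₃ a₃₄ a₄₁ a₄₂ a₄₃ a₄₄
     b₁₁ b₁₂ b₁₃ b₁₄ b₂₁ b₂₂ b₂₃ b₂₄ b₃₁ b₃₂ b₃₃ b₃₄ b₄₁ b₄₂ b₄₃ b₄₄ : α) :
    !![a₁₁, a₁₂, a₁₃, a₁₄; a₂₁, a₂₂, a₂₃, a₂₄; a₃₁, a₃₂, a₃₃, a₃₄; a₄₁, a₄₂, a₄₃, a₄₄] *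
    !![b₁₁, b₁₂, b₁₃, b₁₄; b₂₁, b₂₂, b₂₃, b₂₄; b₃₁, b₃₂, b₃₃, b₃₄; b₄₁, b₄₂, b₄₃, b₄₄] =
    !![a₁₁*b₁₁ + a₁₂*b₂₁ + a₁₃*b₃₁ + a₁₄*b₄₁, a₁₁*b₁₂ + a₁₂*b₂₂ + a₁₃*b₃₂ + a₁₄*b₄₂,
       a₁₁*b₁₃ + a₁₂*b₂₃ + a₁₃*b₃₃ + a₁₄*b₄₃, a₁₁*b₁₄ + a₁₂*b₂₄ + a₁₃*b₃₄ + a₁₄*b₄₄;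
       a₂₁*b₁₁ + a₂₂*b₂₁ + a₂₃*b₃₁ + a₂₄*b₄₁, a₂₁*b₁₂ + a₂₂*b₂₂ + a₂₃*b₃₂ + a₂₄*b₄₂,
       a₂₁*b₁₃ + a₂₂*b₂₃ + a₂₃*b₃₃ + a₂₄*b₄₃, a₂₁*b₁₄ + a₂₂*b₂₄ + a₂₃*b₃₄ + a₂₄*b₄₄;
       a₃₁*b₁₁ + a₃₂*b₂₁ + a₃₃*b₃₁ + a₃₄*b₄₁, a₃₁*b₁₂ + a₃₂*b₂₂ + a₃₃*b₃₂ + a₃₄*b₄₂,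
       a₃₁*b₁₃ + a₃₂*b₂₃ + a₃₃*b₃₃ + a₃₄*b₄₃, a₃₁*b₁₄ + a₃₂*b₂₄ + a₃₃*b₃₄ + a₃₄*b₄₄;
       a₄₁*b₁₁ + a₄₂*b₂₁ + a₄₃*b₃₁ + a₄₄*b₄₁, a₄₁*b₁₂ + a₄₂*b₂₂ + a₄₃*b₃₂ + a₄₄*b₄₂,
       a₄₁*b₁₃ + a₄₂*b₂₃ + a₄₃*b₃₃ + a₄₄*b₄₃, a₄₁*b₁₄ + a₄₂*b₂₄ + a₄₃*b₃₄ + a₄₄*b₄₄] := by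
  apply Matrix.ext
  intro i j
  fin_cases i <;> fin_cases j <;>
    simp [Matrix.mul_apply, Fin.sum_univ_succ, ← add_assoc]

theorem my_one_fin_four {α : Type*} [Zero α] [One α] :
    (1 : Matrix (Fin 4) (Fin 4) α) = !![1,0,0,0; 0,1,0,0; 0,0,1,0; 0,0,0,1] := by
  apply Matrix.ext
  intro i j
  fin_cases i <;> fin_cases j <;> simp [Matrix.one_apply] <;> rfl

theorem my_smul_fin_four {α : Type*} [Mul α]
    (x a₁₁ a₁₂ a₁₃ a₁₄ a₂₁ a₂₂ a₂₃ a₂₄ a₃₁ a₃₂ a₃₃ a₃₄ a₄₁ a₄₂ a₄₃ a₄₄ : α) :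
    x • !![a₁₁, a₁₂, a₁₃, a₁₄; a₂₁, a₂₂, a₂₃, a₂₄; a₃₁, a₃₂, a₃₃, a₃₄; a₄₁, a₄₂, a₄₃, a₄₄] =
    !![x*a₁₁, x*a₁₂, x*a₁₃, x*a₁₄; x*a₂₁, x*a₂₂, x*a₂₃, x*a₂₄;
       x*a₃₁, x*a₃₂, x*a₃₃, x*a₃₄; x*a₄₁, x*a₄₂, x*a₄₃, x*a₄₄] := by
  apply Matrix.ext
  intro i j
  fin_cases i <;> fin_cases j <;> rfl

theorem stmt_6 (K : Type*) [Field K] (a b : K) :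
    letI X : MvPolynomial (Fin 3) K := MvPolynomial.X 0
    letI Y : MvPolynomial (Fin 3) K := MvPolynomial.X 1
    letI Z : MvPolynomial (Fin 3) K := MvPolynomial.X 2
    letI f : MvPolynomial (Fin 3) K := Y ^ 2 * Z - X ^ 3 - C a * X * Z ^ 2 - C b * Z ^ 3
    letI A : Matrix (Fin 4) (Fin 4) (MvPolynomial (Fin 3) K) :=
      !![Z, Y * Z, X ^ 2, 0;
         -Y, -(C b * Z ^ 2), C a * Y * Z, X ^ 2 + C a * Z ^ 2;
         X, 0, -(C b * Z ^ 2) - C a * X * Z, -(Y * Z);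
         0, X, Y, Z]
    letI B : Matrix (Fin 4) (Fin 4) (MvPolynomial (Fin 3) K) :=
      !![-(C b * Z ^ 2) - C a * X * Z, -(Y * Z), -X ^ 2, C a * Z ^ 2 * Y;
         Y, Z, 0, -X ^ 2 - C a * Z ^ 2;
         -X, 0, Z, Y * Z;
         0, -X, -Y, -(C b * Z ^ 2)]
    A * B = f • (1 : Matrix (Fin 4) (Fin 4) (MvPolynomial (Fin 3) K)) ∧
    B * A = f • (1 : Matrix (Fin 4) (Fin 4) (MvPolynomial (Fin 3) K)) := by
  constructor <;>
  · rw [my_mul_fin_four, my_one_fin_four, my_smul_fin_four]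
    congr 1 <;> ring
end

section
/- Let K be a field, a, b, λ, μ ∈ K with μ² = λ³ + aλ + b, and P = −X² − λXZ − (a + λ²)Z² ∈ K[X,Y,Z]. Then the following diagram commutes: [[0, −Y − μZ], [1, λX + λ²Z]] · [[−X² − aZ², bZ² − Y²], [−Z, −X]] = [[X − λZ, Z(Y + μZ)], [μZ − Y, P]] · [[0, Y + μZ], [1, λ]], as an identity of 2×2 matrices over K[X,Y,Z]. -/
open MvPolynomial

theorem stmt_9 (K : Type*) [Field K] (a b lam mu : K)
    (h : mu ^ 2 = lam ^ 3 + a * lam + b) :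
    letI X : MvPolynomial (Fin 3) K := MvPolynomial.X 0
    letI Y : MvPolynomial (Fin 3) K := MvPolynomial.X 1
    letI Z : MvPolynomial (Fin 3) K := MvPolynomial.X 2
    letI P : MvPolynomial (Fin 3) K := -X ^ 2 - C lam * X * Z - C (a + lam ^ 2) * Z ^ 2
    (!![0, -Y - C mu * Z; 1, C lam * X + C (lam ^ 2) * Z] *
      !![-X ^ 2 - C a * Z ^ 2, C b * Z ^ 2 - Y ^ 2; -Z, -X]
      : Matrix (Fin 2) (Fin 2) (MvPolynomial (Fin 3) K)) =
    !![X - C lam * Z, Z * (Y + C mu * Z); C mu * Z - Y, P] *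
      !![0, Y + C mu * Z; 1, C lam] := by
  have hC : (C (mu ^ 2) : MvPolynomial (Fin 3) K) = C (lam ^ 3 + a * lam + b) := by rw [h]
  simp only [map_add, map_mul, map_pow] at hC
  refine Matrix.ext fun i j => ?_
  fin_cases i <;> fin_cases j <;>
    simp [Matrix.mul_apply, Fin.sum_univ_succ] 
  · ring
  · ring
  · ring
  · linear_combination -(MvPolynomial.X (2:Fin 3) : MvPolynomial (Fin 3) K) ^ 2 * hC
end

section
/- Let K be a field, a, b, λ, μ ∈ K with μ² = λ³ + aλ + b, and P = −X² − λXZ − (a + λ²)Z² ∈ K[X,Y,Z]. Then [[0, −Y − μZ], [X + λZ, (a + λ²)Z]] · [[aXZ − Y² + bZ², −X], [−X², −Z]] = [[X − λZ, Z(Y + μZ)], [μZ − Y, P]] · [[λμZ² + XY + μXZ + λYZ, 0], [λ²Z, 1]], as an identity of 2×2 matrices over K[X,Y,Z]. -/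
open MvPolynomial

theorem stmt_11 (K : Type*) [Field K] (a b lam mu : K)
    (h : mu ^ 2 = lam ^ 3 + a * lam + b) :
    letI X : MvPolynomial (Fin 3) K := MvPolynomial.X 0
    letI Y : MvPolynomial (Fin 3) K := MvPolynomial.X 1
    letI Z : MvPolynomial (Fin 3) K := MvPolynomial.X 2
    letI P : MvPolynomial (Fin 3) K := -X ^ 2 - C lam * X * Z - C (a + lam ^ 2) * Z ^ 2
    (!![0, -Y - C mu * Z; X + C lam * Z, C (a + lam ^ 2) * Z] *
      !![C a * X * Z - Y ^ 2 + C b * Z ^ 2, -X; -X ^ 2, -Z]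
      : Matrix (Fin 2) (Fin 2) (MvPolynomial (Fin 3) K)) =
    !![X - C lam * Z, Z * (Y + C mu * Z); C mu * Z - Y, P] *
      !![C (lam * mu) * Z ^ 2 + X * Y + C mu * X * Z + C lam * Y * Z, 0; C (lam ^ 2) * Z, 1] := by
  have hb : (C b : MvPolynomial (Fin 3) K) = C (mu ^ 2) - C (lam ^ 3) - C a * C lam := by
    rw [h]; simp [C_add, C_mul, C_pow]; ring
  apply Matrix.ext
  intro i j
  fin_cases i <;> fin_cases j <;>
    simp [Matrix.mul_apply, Fin.sum_univ_succ, hb, C_add, C_mul, C_pow] <;> ring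
end

section
/- Let K be a field, a, b ∈ K, R = K[X,Y,Z] with the standard grading, f = Y²Z − X³ − aXZ² − bZ³, and A = R/(f). Then the sequence A(−1)² → A → A/(Z, X)A → 0, where the first map is given by the row vector (Z, X), is exact, and the kernel of (Z, X): A(−1)² → A is generated (over A) by the columns of the matrix [[X, bZ² − Y²], [−Z, X² + aZ²]]; i.e., for g, h ∈ R with gZ + hX ∈ (f), the vector (g, h) lies in the R-span of (X, −Z), (bZ² − Y², X² + aZ²), and f·R². -/
open MvPolynomial

lemma primeX0 (K : Type*) [Field K] : Prime (MvPolynomial.X 0 : MvPolynomial (Fin 3) K) := by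
  rw [← MulEquiv.prime_iff (MvPolynomial.finSuccEquiv K 2).toMulEquiv]
  simpa [MvPolynomial.finSuccEquiv_X_zero] using
    (Polynomial.prime_X : Prime (Polynomial.X : Polynomial (MvPolynomial (Fin 2) K)))

theorem stmt_14 (K : Type*) [Field K] (a b : K)
    (g h : MvPolynomial (Fin 3) K)
    (hgh : g * MvPolynomial.X 2 + h * MvPolynomial.X 0 ∈
      Ideal.span {(MvPolynomial.X 1 ^ 2 * MvPolynomial.X 2 - MvPolynomial.X 0 ^ 3 -
        C a * MvPolynomial.X 0 * MvPolynomial.X 2 ^ 2 - C b * MvPolynomial.X 2 ^ 3 :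
        MvPolynomial (Fin 3) K)}) :
    letI X : MvPolynomial (Fin 3) K := MvPolynomial.X 0
    letI Y : MvPolynomial (Fin 3) K := MvPolynomial.X 1
    letI Z : MvPolynomial (Fin 3) K := MvPolynomial.X 2
    letI f : MvPolynomial (Fin 3) K := Y ^ 2 * Z - X ^ 3 - C a * X * Z ^ 2 - C b * Z ^ 3
    ∃ c₁ c₂ u₁ u₂ : MvPolynomial (Fin 3) K,
      g = c₁ * X + c₂ * (C b * MvPolynomial.X 2 ^ 2 - MvPolynomial.X 1 ^ 2) + f * u₁ ∧
      h = c₁ * (-Z) + c₂ * (MvPolynomial.X 0 ^ 2 + C a * MvPolynomial.X 2 ^ 2) + f * u₂ := by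
  rw [Ideal.mem_span_singleton'] at hgh
  obtain ⟨q, hq⟩ := hgh
  have key : (MvPolynomial.X 0 : MvPolynomial (Fin 3) K) ∣
      (g + q * (C b * MvPolynomial.X 2 ^ 2 - MvPolynomial.X 1 ^ 2)) * MvPolynomial.X 2 := by
    refine ⟨-(h + q * (MvPolynomial.X 0 ^ 2 + C a * MvPolynomial.X 2 ^ 2)), ?_⟩
    show _ = MvPolynomial.X 0 * _
    linear_combination -hq
  have hXprime : Prime (MvPolynomial.X 0 : MvPolynomial (Fin 3) K) := primeX0 K
  have hndvd : ¬ (MvPolynomial.X 0 : MvPolynomial (Fin 3) K) ∣ MvPolynomial.X 2 := by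
    rintro ⟨t, ht⟩
    have := congrArg (MvPolynomial.eval (fun i => if i = 2 then (1 : K) else 0)) ht
    simp at this
  have hdvd : (MvPolynomial.X 0 : MvPolynomial (Fin 3) K) ∣ (g + q * (C b * MvPolynomial.X 2 ^ 2 - MvPolynomial.X 1 ^ 2)) :=
    (hXprime.dvd_or_dvd key).resolve_right hndvd
  obtain ⟨c₁, hc₁⟩ := hdvd
  refine ⟨c₁, -q, 0, 0, ?_, ?_⟩
  · linear_combination hc₁
  · have hZ : c₁ * MvPolynomial.X 2 = -(h + q * (MvPolynomial.X 0 ^ 2 + C a * MvPolynomial.X 2 ^ 2)) := by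
      have hXne : (MvPolynomial.X 0 : MvPolynomial (Fin 3) K) ≠ 0 := MvPolynomial.X_ne_zero 0
      apply mul_left_cancel₀ hXne
      calc MvPolynomial.X 0 * (c₁ * MvPolynomial.X 2) = (g + q * (C b * MvPolynomial.X 2 ^ 2 - MvPolynomial.X 1 ^ 2)) * MvPolynomial.X 2 := by
            rw [hc₁]; ring
        _ = MvPolynomial.X 0 * -(h + q * (MvPolynomial.X 0 ^ 2 + C a * MvPolynomial.X 2 ^ 2)) := by
            linear_combination -hq
    linear_combination hZ
end

section
/- Let K be a field, a, b, λ, μ ∈ K with μ² = λ³ + aλ + b, f = Y²Z − X³ − aXZ² − bZ³ ∈ R = K[X,Y,Z], and P = −X² − λXZ − (a + λ²)Z². If g, h ∈ R satisfy g(Y − μZ) + h(X − λZ) ∈ (f), then (g, h) lies in the R-submodule of R² generated by (X − λZ, μZ − Y), (Z(Y + μZ), P), and f·R². -/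
/-! Since `(λ : μ : 1)` lies on the cubic, `f = (Y - μZ) · Z(Y + μZ) + (X - λZ) · P`. Writing
`g(Y - μZ) + h(X - λZ) = q f` and subtracting `q` times this identity leaves a syzygy
`(g - q Z(Y + μZ)) (Y - μZ) = (q P - h) (X - λZ)` of the two linear forms. These are distinct
primes of `K[X,Y,Z]`, so the syzygy is a multiple `c₁ (X - λZ, μZ - Y)` of the Koszul relation. -/

open MvPolynomial

theorem weierstrass_eq_mul_add_mul {R : Type*} [CommRing R] {a b lam mu : R}
    (hpt : mu ^ 2 = lam ^ 3 + a * lam + b) (x y z : R) :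
    y ^ 2 * z - x ^ 3 - a * x * z ^ 2 - b * z ^ 3 =
      (y - mu * z) * (z * (y + mu * z)) +
        (x - lam * z) * (-x ^ 2 - lam * x * z - (a + lam ^ 2) * z ^ 2) := by
  linear_combination z ^ 3 * hpt

theorem exists_eq_mul_and_eq_mul_of_mul_eq_mul {α : Type*} [CommMonoidWithZero α]
    [IsCancelMulZero α] {p s u v : α} (hp : Prime p) (hps : ¬ p ∣ s) (h : u * s = v * p) :
    ∃ c, u = c * p ∧ v = c * s := by
  obtain ⟨c, rfl⟩ : p ∣ u :=
    (hp.dvd_or_dvd ⟨v, by rw [h, mul_comm]⟩).resolve_right hps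
  refine ⟨c, mul_comm p c, mul_right_cancel₀ hp.ne_zero ?_⟩
  rw [← h, mul_comm p c, mul_right_comm]

namespace MvPolynomial

variable {R : Type*} [CommRing R] {n : ℕ}

theorem finSuccEquiv_X_zero_sub_C_mul_X_succ (c : R) (j : Fin n) :
    finSuccEquiv R n (X 0 - C c * X j.succ) = Polynomial.X - Polynomial.C (C c * X j) := by
  simp [finSuccEquiv_apply]

theorem prime_X_zero_sub_C_mul_X_succ [IsDomain R] (c : R) (j : Fin n) :
    Prime (X 0 - C c * X j.succ : MvPolynomial (Fin (n + 1)) R) := by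
  rw [← MulEquiv.prime_iff (finSuccEquiv R n), finSuccEquiv_X_zero_sub_C_mul_X_succ]
  exact Polynomial.prime_X_sub_C _

theorem X_sub_C_mul_X_ne_zero [Nontrivial R] {σ : Type*} {i j : σ} (hij : i ≠ j) (d : R) :
    (X i - C d * X j : MvPolynomial σ R) ≠ 0 := fun h0 => by
  classical
  simpa [Pi.single_apply, hij.symm] using congrArg (eval (Pi.single i 1)) h0

theorem X_zero_sub_C_mul_X_succ_not_dvd [Nontrivial R] {i j : Fin n} (hij : i ≠ j) (c d : R) :
    ¬ (X 0 - C c * X j.succ : MvPolynomial (Fin (n + 1)) R) ∣ X i.succ - C d * X j.succ := by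
  rw [← map_dvd_iff (finSuccEquiv R n), finSuccEquiv_X_zero_sub_C_mul_X_succ,
    Polynomial.dvd_iff_isRoot]
  simpa [finSuccEquiv_apply] using X_sub_C_mul_X_ne_zero hij d

end MvPolynomial

theorem stmt_15 (K : Type*) [Field K] (a b lam mu : K)
    (hpt : mu ^ 2 = lam ^ 3 + a * lam + b)
    (g h : MvPolynomial (Fin 3) K)
    (hgh : g * (MvPolynomial.X 1 - C mu * MvPolynomial.X 2)
         + h * (MvPolynomial.X 0 - C lam * MvPolynomial.X 2) ∈
      Ideal.span {(MvPolynomial.X 1 ^ 2 * MvPolynomial.X 2 - MvPolynomial.X 0 ^ 3 -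
        C a * MvPolynomial.X 0 * MvPolynomial.X 2 ^ 2 - C b * MvPolynomial.X 2 ^ 3 :
        MvPolynomial (Fin 3) K)}) :
    letI X : MvPolynomial (Fin 3) K := MvPolynomial.X 0
    letI Y : MvPolynomial (Fin 3) K := MvPolynomial.X 1
    letI Z : MvPolynomial (Fin 3) K := MvPolynomial.X 2
    letI f : MvPolynomial (Fin 3) K := Y ^ 2 * Z - X ^ 3 - C a * X * Z ^ 2 - C b * Z ^ 3
    letI P : MvPolynomial (Fin 3) K := -X ^ 2 - C lam * X * Z - C (a + lam ^ 2) * Z ^ 2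
    ∃ c₁ c₂ u₁ u₂ : MvPolynomial (Fin 3) K,
      g = c₁ * (X - C lam * Z) + c₂ * (Z * (Y + C mu * Z)) + f * u₁ ∧
      h = c₁ * (C mu * Z - Y) + c₂ * P + f * u₂ := by
  set X : MvPolynomial (Fin 3) K := MvPolynomial.X 0
  set Y : MvPolynomial (Fin 3) K := MvPolynomial.X 1
  set Z : MvPolynomial (Fin 3) K := MvPolynomial.X 2
  set f := Y ^ 2 * Z - X ^ 3 - C a * X * Z ^ 2 - C b * Z ^ 3
  set P := -X ^ 2 - C lam * X * Z - C (a + lam ^ 2) * Z ^ 2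
  obtain ⟨q, hq⟩ := Ideal.mem_span_singleton'.mp hgh
  have hf : f = (Y - C mu * Z) * (Z * (Y + C mu * Z)) + (X - C lam * Z) * P := by
    have hpt' : C mu ^ 2 = C lam ^ 3 + C a * C lam + (C b : MvPolynomial (Fin 3) K) := by
      simp only [← map_pow, ← map_mul, ← map_add, hpt]
    exact (weierstrass_eq_mul_add_mul hpt' X Y Z).trans (by simp only [P, map_add, map_pow])
  obtain ⟨c₁, hu, hv⟩ := exists_eq_mul_and_eq_mul_of_mul_eq_mul
    (p := X - C lam * Z) (s := Y - C mu * Z) (u := g - q * (Z * (Y + C mu * Z))) (v := q * P - h)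
    (prime_X_zero_sub_C_mul_X_succ lam (1 : Fin 2))
    (X_zero_sub_C_mul_X_succ_not_dvd (i := 0) (j := 1) (by decide) lam mu)
    (by linear_combination q * hf - hq)
  exact ⟨c₁, q, 0, 0, by linear_combination hu, by linear_combination -hv⟩
end

section
/- Let K be a field, a, b ∈ K, and f = Y²Z − X³ − aXZ² − bZ³ ∈ K[X,Y,Z]. The only linear forms (up to scalar) dividing Z(Y + μZ) for μ ∈ K are Z and Y + μZ, both of which divide Z(Y² − μ²Z²), and neither of which divides f. In particular, the vector (Z(Y + μZ), −X² − λXZ − (a + λ²)Z²) does not lie in (X,Y,Z)·L where L = ker((Y − μZ, X − λZ): A(−1)² → A) and A = K[X,Y,Z]/(f), provided μ² = λ³ + aλ + b. -/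
/-!
A linear form is irreducible, hence prime in the factorial ring `K[X, Y, Z]`, and a linear form
dividing another one is a scalar multiple of it; this classifies the linear divisors of
`Z (Y + μZ)`. Evaluating at `(1, 0, 0)` shows that neither `Z` nor `Y + μZ` divides `f`.

For the non-membership, pick `t ≠ ±μ` and restrict to the line through `0` and `(λ, t, 1)`,
truncated at order three: `p ↦ p(λT, tT, T) mod T³`. As `f` is a cubic form, this is a ring map
`ψ : A → K[T]/(T³)`. It kills `X - λZ` and maps `(X, Y, Z)` into the multiples of
`ψ(Y - μZ) = (t - μ)T`, so it kills the first coordinate of every element of `(X, Y, Z) • L`,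
whereas `ψ(Z (Y + μZ)) = (t + μ)T² ≠ 0`.
-/

open MvPolynomial

section LinearForms

variable {σ K : Type*} [Field K]

theorem prime_of_totalDegree_eq_one {p : MvPolynomial σ K} (hp : p.totalDegree = 1) :
    Prime p := by
  refine (irreducible_of_totalDegree_eq_one hp fun x hx => isUnit_iff_ne_zero.mpr ?_).prime
  rintro rfl
  obtain rfl : p = 0 := MvPolynomial.ext _ _ fun d => by simpa using hx d
  simp at hp

theorem exists_eq_C_mul_of_dvd {l p : MvPolynomial σ K} (hl : l.totalDegree = 1)
    (hp : p.totalDegree = 1) (h : l ∣ p) : ∃ c : K, c ≠ 0 ∧ l = C c * p := by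
  obtain ⟨s, rfl⟩ := h
  have hl0 : l ≠ 0 := by rintro rfl; simp at hl
  have hs0 : s ≠ 0 := by rintro rfl; simp at hp
  have hs : s.totalDegree = 0 := by
    rw [totalDegree_mul_of_isDomain hl0 hs0, hl] at hp; omega
  obtain ⟨c, rfl⟩ : ∃ c, s = C c := ⟨_, totalDegree_eq_zero_iff_eq_C.mp hs⟩
  have hc : c ≠ 0 := by rintro rfl; simp at hs0
  refine ⟨c⁻¹, inv_ne_zero hc, ?_⟩
  rw [mul_left_comm, ← C_mul, inv_mul_cancel₀ hc, C_1, mul_one]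

theorem exists_eq_C_mul_of_dvd_mul {l p q : MvPolynomial σ K} (hl : l.totalDegree = 1)
    (hp : p.totalDegree = 1) (hq : q.totalDegree = 1) (h : l ∣ p * q) :
    ∃ c : K, c ≠ 0 ∧ (l = C c * p ∨ l = C c * q) := by
  rcases (prime_of_totalDegree_eq_one hl).dvd_or_dvd h with hlp | hlq
  · obtain ⟨c, hc, rfl⟩ := exists_eq_C_mul_of_dvd hl hp hlp
    exact ⟨c, hc, .inl rfl⟩
  · obtain ⟨c, hc, rfl⟩ := exists_eq_C_mul_of_dvd hl hq hlq
    exact ⟨c, hc, .inr rfl⟩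

theorem totalDegree_X_add_C_mul_X {i j : σ} (hij : i ≠ j) (c : K) :
    (X i + C c * X j : MvPolynomial σ K).totalDegree = 1 := by
  classical
  refine ((isHomogeneous_X _ _).add (isHomogeneous_C_mul_X c j)).totalDegree fun h => ?_
  simpa [Pi.single_apply, hij.symm] using congrArg (eval (Pi.single i 1)) h

theorem not_dvd_of_eval_eq_zero {d p : MvPolynomial σ K} (x : σ → K) (hd : eval x d = 0)
    (hp : eval x p ≠ 0) : ¬ d ∣ p := by
  rintro ⟨q, rfl⟩
  simp [hd] at hp

end LinearForms

theorem apply_zero_eq_zero_of_mem_smul_ker {A B : Type*} [CommRing A] [CommRing B] (ψ : A →+* B)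
    {I : Ideal A} {α β : A} (hβ : ψ β = 0) (hI : I ≤ (Ideal.span {ψ α}).comap ψ)
    {w : Fin 2 → A}
    (hw : w ∈ I • LinearMap.ker (!![α, β] : Matrix (Fin 1) (Fin 2) A).mulVecLin) :
    ψ (w 0) = 0 := by
  refine Submodule.smul_induction_on hw (fun r hr v hv => ?_) fun x y hx hy => ?_
  · obtain ⟨c, hc⟩ := Ideal.mem_span_singleton'.mp (hI hr)
    have hv0 : α * v 0 + β * v 1 = 0 := by
      simpa [Matrix.mulVec, dotProduct, Fin.sum_univ_two] using
        congr_fun (LinearMap.mem_ker.mp hv) 0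
    calc ψ ((r • v) 0) = c * ψ (α * v 0 + β * v 1) := by simp [← hc, hβ]; ring
      _ = 0 := by rw [hv0, map_zero, mul_zero]
  · simp [hx, hy]

theorem MvPolynomial.IsHomogeneous.aeval_algebraMap_mul {σ R B : Type*} [CommSemiring R]
    [CommSemiring B] [Algebra R B] {f : MvPolynomial σ R} {n : ℕ} (hf : f.IsHomogeneous n)
    (x : σ → R) (ε : B) :
    MvPolynomial.aeval (fun i => algebraMap R B (x i) * ε) f =
      algebraMap R B (eval x f) * ε ^ n := by
  conv_lhs => rw [f.as_sum]
  conv_rhs => rw [f.as_sum]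
  rw [map_sum, map_sum, map_sum, Finset.sum_mul]
  refine Finset.sum_congr rfl fun d hd => ?_
  rw [aeval_monomial, eval_monomial, ← hf (mem_support_iff.mp hd)]
  simp only [Finsupp.weight_apply, Finsupp.sum, Pi.one_apply, smul_eq_mul, mul_one]
  rw [← Finset.prod_pow_eq_pow_sum]
  simp only [Finsupp.prod, mul_pow, Finset.prod_mul_distrib, map_mul, map_prod, map_pow]
  ring

section RadialJet

variable {σ R : Type*} [CommRing R]

noncomputable def radialJet {f : MvPolynomial σ R} {n : ℕ} (hf : f.IsHomogeneous n)
    (x : σ → R) :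
    MvPolynomial σ R ⧸ Ideal.span {f} →+*
      Polynomial R ⧸ Ideal.span {(Polynomial.X ^ n : Polynomial R)} :=
  Ideal.Quotient.lift _
    (aeval fun i => algebraMap R _ (x i) *
      Ideal.Quotient.mk (Ideal.span {Polynomial.X ^ n}) Polynomial.X).toRingHom
    fun g hg => by
      obtain ⟨g, rfl⟩ := Ideal.mem_span_singleton'.mp hg
      simp [hf.aeval_algebraMap_mul, ← map_pow]

@[simp]
theorem radialJet_mk {f : MvPolynomial σ R} {n : ℕ} (hf : f.IsHomogeneous n) (x : σ → R)
    (p : MvPolynomial σ R) :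
    radialJet hf x (Ideal.Quotient.mk _ p) =
      aeval (fun i => algebraMap R _ (x i) *
        Ideal.Quotient.mk (Ideal.span {Polynomial.X ^ n}) Polynomial.X) p :=
  rfl

end RadialJet

theorem algebraMap_mul_mk_X_pow_ne_zero {R : Type*} [CommRing R] {c : R} (hc : c ≠ 0) {m n : ℕ}
    (hmn : m < n) :
    algebraMap R _ c * Ideal.Quotient.mk (Ideal.span {(Polynomial.X ^ n : Polynomial R)})
      Polynomial.X ^ m ≠ 0 := by
  rw [← Ideal.Quotient.mk_algebraMap, ← map_pow, ← map_mul, Ne,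
    Ideal.Quotient.eq_zero_iff_mem, Ideal.mem_span_singleton, Polynomial.X_pow_dvd_iff]
  push Not
  exact ⟨m, hmn, by simpa using hc⟩

theorem algebraMap_mul_mem_span_algebraMap_mul {K B : Type*} [Field K] [CommRing B]
    [Algebra K B] {c : K} (hc : c ≠ 0) (d : K) (e : B) :
    algebraMap K B d * e ∈ Ideal.span {algebraMap K B c * e} :=
  Ideal.mem_span_singleton'.mpr ⟨algebraMap K B (d / c), by
    rw [← mul_assoc, ← map_mul, div_mul_cancel₀ _ hc]⟩

theorem exists_sub_ne_zero_and_add_ne_zero {K : Type*} [Field K] (mu : K) :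
    ∃ t : K, t - mu ≠ 0 ∧ t + mu ≠ 0 := by
  by_cases h : mu = 0
  · exact ⟨1, by simp [h], by simp [h]⟩
  · exact ⟨0, by simpa using h, by simpa using h⟩

theorem notMem_span_X_smul_ker {K : Type*} [Field K] {f : MvPolynomial (Fin 3) K} {n : ℕ}
    (hf : f.IsHomogeneous n) (hn : 2 < n) (lam mu : K)
    (q : MvPolynomial (Fin 3) K ⧸ Ideal.span {f}) :
    letI π := Ideal.Quotient.mk (Ideal.span {f})
    ![π (X 2 * (X 1 + C mu * X 2)), q] ∉ Ideal.span {π (X 0), π (X 1), π (X 2)} •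
      LinearMap.ker (!![π (X 1 - C mu * X 2), π (X 0 - C lam * X 2)] :
        Matrix (Fin 1) (Fin 2) _).mulVecLin := by
  intro hmem
  obtain ⟨t, htm, htp⟩ := exists_sub_ne_zero_and_add_ne_zero mu
  set ε := Ideal.Quotient.mk (Ideal.span {(Polynomial.X ^ n : Polynomial K)}) Polynomial.X
  set ψ := radialJet hf ![lam, t, 1]
  have hα : ψ (Ideal.Quotient.mk _ (X 1 - C mu * X 2)) = algebraMap K _ (t - mu) * ε := by
    simp [ψ, ε]; ring
  have hβ : ψ (Ideal.Quotient.mk _ (X 0 - C lam * X 2)) = 0 := by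
    simp [ψ]
  have hv : ψ (Ideal.Quotient.mk _ (X 2 * (X 1 + C mu * X 2))) =
      algebraMap K _ (t + mu) * ε ^ 2 := by
    simp [ψ, ε]; ring
  refine algebraMap_mul_mk_X_pow_ne_zero htp hn ?_
  rw [← hv]
  refine apply_zero_eq_zero_of_mem_smul_ker ψ hβ ?_ hmem
  rw [Ideal.span_le, hα]
  rintro _ (rfl | rfl | rfl) <;>
    simp only [SetLike.mem_coe, Ideal.mem_comap, ψ, radialJet_mk, aeval_X] <;>
    exact algebraMap_mul_mem_span_algebraMap_mul htm _ ε

theorem isHomogeneous_weierstrass {K : Type*} [Field K] (a b : K) :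
    (X 1 ^ 2 * X 2 - X 0 ^ 3 - C a * X 0 * X 2 ^ 2 - C b * X 2 ^ 3 :
      MvPolynomial (Fin 3) K).IsHomogeneous 3 := by
  refine IsHomogeneous.sub (IsHomogeneous.sub (IsHomogeneous.sub ?_ ?_) ?_) ?_
  · exact (isHomogeneous_X_pow 1 2).mul (isHomogeneous_X _ _)
  · exact isHomogeneous_X_pow 0 3
  · exact ((isHomogeneous_C _ a).mul (isHomogeneous_X _ _)).mul (isHomogeneous_X_pow 2 2)
  · exact isHomogeneous_C_mul_X_pow b 2 3

set_option synthInstance.maxHeartbeats 1000000 in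
theorem stmt_18_general (K : Type*) [Field K] (a b lam mu : K) :
    letI X : MvPolynomial (Fin 3) K := MvPolynomial.X 0
    letI Y : MvPolynomial (Fin 3) K := MvPolynomial.X 1
    letI Z : MvPolynomial (Fin 3) K := MvPolynomial.X 2
    letI f : MvPolynomial (Fin 3) K := Y ^ 2 * Z - X ^ 3 - C a * X * Z ^ 2 - C b * Z ^ 3
    letI P : MvPolynomial (Fin 3) K := -X ^ 2 - C lam * X * Z - C (a + lam ^ 2) * Z ^ 2
    letI A := MvPolynomial (Fin 3) K ⧸ Ideal.span {f}
    letI π : MvPolynomial (Fin 3) K →+* A := Ideal.Quotient.mk (Ideal.span {f})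
    letI L : Submodule A (Fin 2 → A) :=
      LinearMap.ker (!![π (Y - C mu * Z), π (X - C lam * Z)] :
        Matrix (Fin 1) (Fin 2) A).mulVecLin
    (∀ l : MvPolynomial (Fin 3) K, l ≠ 0 → l.IsHomogeneous 1 →
        l ∣ Z * (Y + C mu * Z) →
        ∃ c : K, c ≠ 0 ∧ (l = C c * Z ∨ l = C c * (Y + C mu * Z))) ∧
    Z ∣ Z * (Y ^ 2 - C (mu ^ 2) * Z ^ 2) ∧
    (Y + C mu * Z) ∣ Z * (Y ^ 2 - C (mu ^ 2) * Z ^ 2) ∧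
    ¬ Z ∣ f ∧ ¬ (Y + C mu * Z) ∣ f ∧
    ![π (Z * (Y + C mu * Z)), π P] ∉
      (Ideal.span {π X, π Y, π Z} : Ideal A) • L := by
  have hZ : (X 2 : MvPolynomial (Fin 3) K).totalDegree = 1 := totalDegree_X _
  have hW := totalDegree_X_add_C_mul_X (σ := Fin 3) (by decide : (1 : Fin 3) ≠ 2) mu
  exact ⟨fun l hl0 hl hdvd => exists_eq_C_mul_of_dvd_mul (hl.totalDegree hl0) hZ hW hdvd,
    dvd_mul_right _ _, ⟨X 2 * (X 1 - C mu * X 2), by rw [map_pow]; ring⟩,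
    not_dvd_of_eval_eq_zero ![1, 0, 0] (by simp) (by simp),
    not_dvd_of_eval_eq_zero ![1, 0, 0] (by simp) (by simp),
    notMem_span_X_smul_ker (isHomogeneous_weierstrass a b) (by norm_num) lam mu _⟩

set_option synthInstance.maxHeartbeats 1000000 in
theorem stmt_18 (K : Type*) [Field K] (a b lam mu : K)
    (hpt : mu ^ 2 = lam ^ 3 + a * lam + b) :
    letI X : MvPolynomial (Fin 3) K := MvPolynomial.X 0
    letI Y : MvPolynomial (Fin 3) K := MvPolynomial.X 1
    letI Z : MvPolynomial (Fin 3) K := MvPolynomial.X 2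
    letI f : MvPolynomial (Fin 3) K := Y ^ 2 * Z - X ^ 3 - C a * X * Z ^ 2 - C b * Z ^ 3
    letI P : MvPolynomial (Fin 3) K := -X ^ 2 - C lam * X * Z - C (a + lam ^ 2) * Z ^ 2
    letI A := MvPolynomial (Fin 3) K ⧸ Ideal.span {f}
    letI π : MvPolynomial (Fin 3) K →+* A := Ideal.Quotient.mk (Ideal.span {f})
    letI L : Submodule A (Fin 2 → A) :=
      LinearMap.ker (!![π (Y - C mu * Z), π (X - C lam * Z)] :
        Matrix (Fin 1) (Fin 2) A).mulVecLin
    (∀ l : MvPolynomial (Fin 3) K, l ≠ 0 → l.IsHomogeneous 1 →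
        l ∣ Z * (Y + C mu * Z) →
        ∃ c : K, c ≠ 0 ∧ (l = C c * Z ∨ l = C c * (Y + C mu * Z))) ∧
    Z ∣ Z * (Y ^ 2 - C (mu ^ 2) * Z ^ 2) ∧
    (Y + C mu * Z) ∣ Z * (Y ^ 2 - C (mu ^ 2) * Z ^ 2) ∧
    ¬ Z ∣ f ∧ ¬ (Y + C mu * Z) ∣ f ∧
    ![π (Z * (Y + C mu * Z)), π P] ∉
      (Ideal.span {π X, π Y, π Z} : Ideal A) • L :=
  stmt_18_general K a b lam mu
end
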